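/- Let θ ∈ (0, π/2). Given three points y₁, y₂, y₄ ∈ ℝ³ with |y₁ − y₂| = |y₁ − y₄| = 1 and ∠y₂ y₁ y₄ = θ, there exist exactly two points y₃ ∈ ℝ³ such that |y₂ − y₃| = |y₄ − y₃| = 1 and ∠y₁ y₂ y₃ = ∠y₃ y₄ y₁ = ∠y₂ y₃ y₄ = θ, and these two points are the reflections of each other across the plane spanned by y₁ − m₂ and y₂ − y₄ through m₂, where m₂ = (y₂ + y₄)/2. -/

import Mathlib

open Real EuclideanGeometry

/-- The cross product in `ℝ³`. -/
def cross3 (a b : EuclideanSpace ℝ (Fin 3)) : EuclideanSpace ℝ (Fin 3) :=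
  WithLp.toLp 2 ![a 1 * b 2 - a 2 * b 1, a 2 * b 0 - a 0 * b 2, a 0 * b 1 - a 1 * b 0]

lemma inner3 (x y : EuclideanSpace ℝ (Fin 3)) :
    (inner ℝ x y : ℝ) = x 0 * y 0 + x 1 * y 1 + x 2 * y 2 := by
  simp [PiLp.inner_apply, Fin.sum_univ_three, RCLike.inner_apply]; ring

lemma cross3_0 (a b : EuclideanSpace ℝ (Fin 3)) : cross3 a b 0 = a 1 * b 2 - a 2 * b 1 := rfl
lemma cross3_1 (a b : EuclideanSpace ℝ (Fin 3)) : cross3 a b 1 = a 2 * b 0 - a 0 * b 2 := rfl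
lemma cross3_2 (a b : EuclideanSpace ℝ (Fin 3)) : cross3 a b 2 = a 0 * b 1 - a 1 * b 0 := rfl

lemma inner_cross_left (a b : EuclideanSpace ℝ (Fin 3)) : (inner ℝ (cross3 a b) a : ℝ) = 0 := by
  simp only [inner3, cross3_0, cross3_1, cross3_2]; ring

lemma inner_cross_right (a b : EuclideanSpace ℝ (Fin 3)) : (inner ℝ (cross3 a b) b : ℝ) = 0 := by
  simp only [inner3, cross3_0, cross3_1, cross3_2]; ring

lemma inner_cross_self (a b : EuclideanSpace ℝ (Fin 3)) :
    (inner ℝ (cross3 a b) (cross3 a b) : ℝ)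
      = (inner ℝ a a : ℝ) * (inner ℝ b b : ℝ) - (inner ℝ a b : ℝ) ^ 2 := by
  simp only [inner3, cross3_0, cross3_1, cross3_2]; ring

lemma cross3_cross3 (w u e : EuclideanSpace ℝ (Fin 3)) :
    cross3 w (cross3 u e) = (inner ℝ w e : ℝ) • u - (inner ℝ w u : ℝ) • e := by
  ext i
  fin_cases i <;>
    simp only [Fin.zero_eta, Fin.mk_one, Fin.reduceFinMk, inner3, cross3_0, cross3_1, cross3_2,
      PiLp.sub_apply, PiLp.smul_apply, smul_eq_mul] <;> ring

lemma eq_zero_of_orth (u e w : EuclideanSpace ℝ (Fin 3))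
    (hu : (inner ℝ u u : ℝ) ≠ 0) (he : (inner ℝ e e : ℝ) ≠ 0) (hue : (inner ℝ u e : ℝ) = 0)
    (h1 : (inner ℝ w u : ℝ) = 0) (h2 : (inner ℝ w e : ℝ) = 0)
    (h3 : (inner ℝ w (cross3 u e) : ℝ) = 0) : w = 0 := by
  have hc : cross3 w (cross3 u e) = 0 := by
    rw [cross3_cross3, h1, h2]; simp
  have h4 := inner_cross_self w (cross3 u e)
  rw [hc] at h4
  simp only [inner_zero_left] at h4
  have h5 := inner_cross_self u e
  rw [hue] at h5
  have h6 : (inner ℝ w w : ℝ) * ((inner ℝ (cross3 u e) (cross3 u e)) : ℝ) = 0 := by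
    rw [h3] at h4; linarith
  have h5' : (inner ℝ (cross3 u e) (cross3 u e) : ℝ) = (inner ℝ u u : ℝ) * (inner ℝ e e : ℝ) := by
    rw [h5]; ring
  rw [h5'] at h6
  rcases mul_eq_zero.1 h6 with h | h
  · exact inner_self_eq_zero.mp h
  · rcases mul_eq_zero.1 h with h' | h'
    · exact absurd h' hu
    · exact absurd h' he

lemma angle_eq_iff_inner (θ : ℝ) (hθ0 : 0 ≤ θ) (hθπ : θ ≤ π) (x y : EuclideanSpace ℝ (Fin 3))
    (hx : ‖x‖ = 1) (hy : ‖y‖ = 1) :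
    InnerProductGeometry.angle x y = θ ↔ (inner ℝ x y : ℝ) = Real.cos θ := by
  constructor
  · intro h
    have := InnerProductGeometry.cos_angle (x := x) (y := y)
    rw [h, hx, hy] at this
    simpa using this.symm
  · intro h
    have hca : Real.cos (InnerProductGeometry.angle x y) = Real.cos θ := by
      rw [InnerProductGeometry.cos_angle, hx, hy, h]; ring
    exact Real.injOn_cos ⟨InnerProductGeometry.angle_nonneg x y,
      InnerProductGeometry.angle_le_pi x y⟩ ⟨hθ0, hθπ⟩ hca

lemma norm_eq_one_iff_inner (x : EuclideanSpace ℝ (Fin 3)) :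
    ‖x‖ = 1 ↔ (inner ℝ x x : ℝ) = 1 := by
  rw [real_inner_self_eq_norm_mul_norm]
  constructor
  · intro h; rw [h]; ring
  · intro h; nlinarith [norm_nonneg x]

set_option maxHeartbeats 2000000 in
/-- Given three points `y₁, y₂, y₄` of an optimal cell with parameter `θ ∈ (0, π/2)`,
there are exactly two choices of the fourth point `y₃` completing it to a cell with
unit sides and all interior angles `θ`, and the two choices are reflections of each
other across the plane through `m₂ = (y₂+y₄)/2` spanned by `y₁ − m₂` and `y₂ − y₄`. -/
theorem stmt_16 (θ : ℝ) (hθ : θ ∈ Set.Ioo 0 (π / 2))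
    (y₁ y₂ y₄ : EuclideanSpace ℝ (Fin 3))
    (h12 : dist y₁ y₂ = 1) (h14 : dist y₁ y₄ = 1)
    (hangle : ∠ y₂ y₁ y₄ = θ) :
    ∃ a b : EuclideanSpace ℝ (Fin 3), a ≠ b ∧
      (dist y₂ a = 1 ∧ dist y₄ a = 1 ∧ ∠ y₁ y₂ a = θ ∧ ∠ a y₄ y₁ = θ ∧ ∠ y₂ a y₄ = θ) ∧
      (dist y₂ b = 1 ∧ dist y₄ b = 1 ∧ ∠ y₁ y₂ b = θ ∧ ∠ b y₄ y₁ = θ ∧ ∠ y₂ b y₄ = θ) ∧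
      (∀ z : EuclideanSpace ℝ (Fin 3),
        (dist y₂ z = 1 ∧ dist y₄ z = 1 ∧ ∠ y₁ y₂ z = θ ∧ ∠ z y₄ y₁ = θ ∧ ∠ y₂ z y₄ = θ) →
        z = a ∨ z = b) ∧
      (let m₂ := midpoint ℝ y₂ y₄
       let n := cross3 (y₁ - m₂) (y₂ - y₄)
       b = a - (2 * (inner ℝ (a - m₂) n : ℝ) / (inner ℝ n n : ℝ)) • n) := by
  obtain ⟨hθ0, hθh⟩ := hθ
  have hπ : (0:ℝ) < π := Real.pi_pos
  have hθπ : θ ≤ π := by linarith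
  have hc0 : 0 < Real.cos θ := Real.cos_pos_of_mem_Ioo ⟨by linarith, hθh⟩
  have hc1 : Real.cos θ < 1 := by
    have := Real.cos_lt_cos_of_nonneg_of_le_pi (le_refl 0) hθπ hθ0
    simpa using this
  set c := Real.cos θ with hcdef
  set m : EuclideanSpace ℝ (Fin 3) := midpoint ℝ y₂ y₄ with hm
  set u : EuclideanSpace ℝ (Fin 3) := y₁ - m with hudef
  set e : EuclideanSpace ℝ (Fin 3) := y₂ - y₄ with hedef
  set n : EuclideanSpace ℝ (Fin 3) := cross3 u e with hndef
  have h2m : y₂ - m = (2⁻¹ : ℝ) • e := by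
    rw [hm, hedef, midpoint_eq_smul_add, invOf_eq_inv]; module
  have h4m : y₄ - m = -((2⁻¹ : ℝ) • e) := by
    rw [hm, hedef, midpoint_eq_smul_add, invOf_eq_inv]; module
  have hme : (2⁻¹ : ℝ) • e = -(y₄ - m) := by rw [h4m, neg_neg]
  have e12 : y₁ - y₂ = u - (2⁻¹ : ℝ) • e := by rw [hudef, ← h2m]; abel
  have e14 : y₁ - y₄ = u + (2⁻¹ : ℝ) • e := by rw [hudef, hme]; abel
  -- convert hypotheses
  have n12 : ‖y₁ - y₂‖ = 1 := by rw [← dist_eq_norm]; exact h12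
  have n14 : ‖y₁ - y₄‖ = 1 := by rw [← dist_eq_norm]; exact h14
  have i12 : (inner ℝ (y₁ - y₂) (y₁ - y₂) : ℝ) = 1 := (norm_eq_one_iff_inner _).1 n12
  have i14 : (inner ℝ (y₁ - y₄) (y₁ - y₄) : ℝ) = 1 := (norm_eq_one_iff_inner _).1 n14
  have ia : (inner ℝ (y₁ - y₂) (y₁ - y₄) : ℝ) = c := by
    have hang : InnerProductGeometry.angle (y₂ - y₁) (y₄ - y₁) = θ := by
      rw [EuclideanGeometry.angle] at hangle
      rw [← vsub_eq_sub y₂ y₁, ← vsub_eq_sub y₄ y₁]; exact hangle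
    have h1 : ‖y₂ - y₁‖ = 1 := by rw [norm_sub_rev]; exact n12
    have h2 : ‖y₄ - y₁‖ = 1 := by rw [norm_sub_rev]; exact n14
    have := (angle_eq_iff_inner θ hθ0.le hθπ _ _ h1 h2).1 hang
    rw [← hcdef] at this
    rw [← inner_neg_neg (𝕜 := ℝ), neg_sub, neg_sub] at this
    exact this
  -- basic inner products
  have exi12 : (inner ℝ u u : ℝ) - (inner ℝ u e : ℝ) + 4⁻¹ * (inner ℝ e e : ℝ) = 1 := by
    rw [e12] at i12
    simp only [inner_sub_left, inner_sub_right, real_inner_smul_left,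
      real_inner_smul_right] at i12
    rw [real_inner_comm u e] at i12
    linarith
  have exi14 : (inner ℝ u u : ℝ) + (inner ℝ u e : ℝ) + 4⁻¹ * (inner ℝ e e : ℝ) = 1 := by
    rw [e14] at i14
    simp only [inner_add_left, inner_add_right, real_inner_smul_left,
      real_inner_smul_right] at i14
    rw [real_inner_comm u e] at i14
    linarith
  have exia : (inner ℝ u u : ℝ) - 4⁻¹ * (inner ℝ e e : ℝ) = c := by
    rw [e12, e14] at ia
    simp only [inner_sub_left, inner_add_left, inner_add_right, inner_sub_right,
      real_inner_smul_left, real_inner_smul_right] at ia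
    rw [real_inner_comm u e] at ia
    linarith
  have hue : (inner ℝ u e : ℝ) = 0 := by linarith
  have huu : (inner ℝ u u : ℝ) = (1 + c) / 2 := by linarith
  have hee : (inner ℝ e e : ℝ) = 2 - 2 * c := by linarith
  have heu : (inner ℝ e u : ℝ) = 0 := by rw [real_inner_comm]; exact hue
  have hnu : (inner ℝ n u : ℝ) = 0 := by rw [hndef]; exact inner_cross_left u e
  have hne : (inner ℝ n e : ℝ) = 0 := by rw [hndef]; exact inner_cross_right u e
  have hun : (inner ℝ u n : ℝ) = 0 := by rw [real_inner_comm]; exact hnu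
  have hen : (inner ℝ e n : ℝ) = 0 := by rw [real_inner_comm]; exact hne
  have hnn : (inner ℝ n n : ℝ) = 1 - c ^ 2 := by
    rw [hndef, inner_cross_self, huu, hee, hue]; ring
  have hnn0 : (0:ℝ) < 1 - c ^ 2 := by nlinarith
  have hn0 : n ≠ 0 := by
    intro h
    rw [h, inner_zero_left] at hnn
    nlinarith
  have h1c : (0:ℝ) < 1 + c := by linarith
  set s : ℝ := Real.sqrt c with hs
  have hs0 : 0 < s := Real.sqrt_pos.2 hc0
  have hs2 : s ^ 2 = c := Real.sq_sqrt hc0.le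
  set al : ℝ := (3 * c - 1) / (1 + c) with hal
  set ga : ℝ := 2 * s / (1 + c) with hga
  have hga0 : 0 < ga := by positivity
  have hga2 : ga ^ 2 = 4 * c / (1 + c) ^ 2 := by
    rw [hga, ← hs2]; field_simp; ring
  -- key verification lemma
  have key : ∀ g : ℝ, g ^ 2 = ga ^ 2 →
      dist y₂ (m + (al • u + g • n)) = 1 ∧ dist y₄ (m + (al • u + g • n)) = 1 ∧
      ∠ y₁ y₂ (m + (al • u + g • n)) = θ ∧ ∠ (m + (al • u + g • n)) y₄ y₁ = θ ∧
      ∠ y₂ (m + (al • u + g • n)) y₄ = θ := by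
    intro g hg
    set p : EuclideanSpace ℝ (Fin 3) := m + (al • u + g • n) with hp
    set w : EuclideanSpace ℝ (Fin 3) := al • u + g • n with hw
    have hpm : p - m = w := by rw [hp, hw]; abel
    have iwu : (inner ℝ w u : ℝ) = (3 * c - 1) / 2 := by
      rw [hw]
      simp only [inner_add_left, real_inner_smul_left]
      rw [huu, hnu, hal]
      field_simp
      ring
    have iwe : (inner ℝ w e : ℝ) = 0 := by
      rw [hw]; simp only [inner_add_left, real_inner_smul_left]; rw [hue, hne]; ring
    have iww : (inner ℝ w w : ℝ) = (1 + c) / 2 := by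
      have hexp : (inner ℝ w w : ℝ) = al ^ 2 * ((1 + c) / 2) + g ^ 2 * (1 - c ^ 2) := by
        rw [hw]
        simp only [inner_add_left, inner_add_right, real_inner_smul_left, real_inner_smul_right]
        rw [huu, hun, hnu, hnn]
        ring
      rw [hexp, hg, hga2, hal]
      field_simp
      ring
    have hp2 : p - y₂ = w - (2⁻¹ : ℝ) • e := by rw [← hpm, ← h2m]; abel
    have hp4 : p - y₄ = w + (2⁻¹ : ℝ) • e := by rw [← hpm, hme]; abel
    have d2 : (inner ℝ (p - y₂) (p - y₂) : ℝ) = 1 := by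
      rw [hp2]
      simp only [inner_sub_left, inner_sub_right, real_inner_smul_left, real_inner_smul_right]
      rw [real_inner_comm w e, iww, iwe, hee]
      ring
    have d4 : (inner ℝ (p - y₄) (p - y₄) : ℝ) = 1 := by
      rw [hp4]
      simp only [inner_add_left, inner_add_right, real_inner_smul_left, real_inner_smul_right]
      rw [real_inner_comm w e, iww, iwe, hee]
      ring
    have np2 : ‖p - y₂‖ = 1 := (norm_eq_one_iff_inner _).2 d2
    have np4 : ‖p - y₄‖ = 1 := (norm_eq_one_iff_inner _).2 d4
    refine ⟨?_, ?_, ?_, ?_, ?_⟩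
    · rw [dist_eq_norm, norm_sub_rev]; exact np2
    · rw [dist_eq_norm, norm_sub_rev]; exact np4
    · rw [EuclideanGeometry.angle, vsub_eq_sub, vsub_eq_sub,
        angle_eq_iff_inner θ hθ0.le hθπ _ _ n12 np2, ← hcdef]
      rw [e12, hp2]
      simp only [inner_sub_left, inner_sub_right, real_inner_smul_left, real_inner_smul_right]
      rw [real_inner_comm w u, real_inner_comm w e, iwu, iwe, hue, hee]
      ring
    · rw [EuclideanGeometry.angle, vsub_eq_sub, vsub_eq_sub,
        angle_eq_iff_inner θ hθ0.le hθπ _ _ np4 n14, ← hcdef]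
      rw [e14, hp4]
      simp only [inner_add_left, inner_add_right, real_inner_smul_left, real_inner_smul_right]
      rw [real_inner_comm u e, iwu, iwe, hue, hee]
      ring
    · have hy2p : y₂ - p = -(p - y₂) := by abel
      have hy4p : y₄ - p = -(p - y₄) := by abel
      have ny2 : ‖y₂ - p‖ = 1 := by rw [norm_sub_rev]; exact np2
      have ny4 : ‖y₄ - p‖ = 1 := by rw [norm_sub_rev]; exact np4
      rw [EuclideanGeometry.angle, vsub_eq_sub, vsub_eq_sub,
        angle_eq_iff_inner θ hθ0.le hθπ _ _ ny2 ny4, ← hcdef]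
      rw [hy2p, hy4p, inner_neg_neg, hp2, hp4]
      simp only [inner_sub_left, inner_add_right, real_inner_smul_left, real_inner_smul_right]
      rw [real_inner_comm w e, iww, iwe, hee]
      ring
  have keyA := key ga rfl
  have keyB := key (-ga) (by ring)
  refine ⟨m + (al • u + ga • n), m + (al • u + (-ga) • n), ?_, keyA, keyB, ?_, ?_⟩
  · intro hab
    have h' : ((2 * ga) : ℝ) • n = 0 := by
      have h : (m + (al • u + ga • n)) - (m + (al • u + (-ga) • n)) = (2 * ga) • n := by
        module
      rw [hab, sub_self] at h
      exact h.symm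
    rcases smul_eq_zero.1 h' with h | h
    · exact absurd h (by positivity)
    · exact hn0 h
  · intro z ⟨hz2, hz4, hza1, hza2, hza3⟩
    set w : EuclideanSpace ℝ (Fin 3) := z - m with hwdef
    have hz2' : z - y₂ = w - (2⁻¹ : ℝ) • e := by rw [hwdef, ← h2m]; abel
    have hz4' : z - y₄ = w + (2⁻¹ : ℝ) • e := by rw [hwdef, hme]; abel
    have iz2 : (inner ℝ (z - y₂) (z - y₂) : ℝ) = 1 := by
      rw [← norm_eq_one_iff_inner, ← norm_sub_rev, ← dist_eq_norm]; exact hz2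
    have iz4 : (inner ℝ (z - y₄) (z - y₄) : ℝ) = 1 := by
      rw [← norm_eq_one_iff_inner, ← norm_sub_rev, ← dist_eq_norm]; exact hz4
    have nz2 : ‖z - y₂‖ = 1 := (norm_eq_one_iff_inner _).2 iz2
    have ex2 : (inner ℝ w w : ℝ) - (inner ℝ w e : ℝ) + 4⁻¹ * (inner ℝ e e : ℝ) = 1 := by
      rw [hz2'] at iz2
      simp only [inner_sub_left, inner_sub_right, real_inner_smul_left,
        real_inner_smul_right] at iz2
      rw [real_inner_comm w e] at iz2
      linarith
    have ex4 : (inner ℝ w w : ℝ) + (inner ℝ w e : ℝ) + 4⁻¹ * (inner ℝ e e : ℝ) = 1 := by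
      rw [hz4'] at iz4
      simp only [inner_add_left, inner_add_right, real_inner_smul_left,
        real_inner_smul_right] at iz4
      rw [real_inner_comm w e] at iz4
      linarith
    have iwe : (inner ℝ w e : ℝ) = 0 := by linarith
    have iww : (inner ℝ w w : ℝ) = (1 + c) / 2 := by linarith
    have ia1 : (inner ℝ (y₁ - y₂) (z - y₂) : ℝ) = c := by
      rw [EuclideanGeometry.angle, vsub_eq_sub, vsub_eq_sub] at hza1
      have := (angle_eq_iff_inner θ hθ0.le hθπ _ _ n12 nz2).1 hza1
      rw [← hcdef] at this
      exact this
    have iwu : (inner ℝ w u : ℝ) = (3 * c - 1) / 2 := by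
      rw [e12, hz2'] at ia1
      simp only [inner_sub_left, inner_sub_right, real_inner_smul_left,
        real_inner_smul_right] at ia1
      rw [real_inner_comm w e, real_inner_comm w u] at ia1
      rw [hue, hee] at ia1
      linarith
    set t : ℝ := (inner ℝ w n : ℝ) / (1 - c ^ 2) with ht
    have itn : (inner ℝ w n : ℝ) = t * (1 - c ^ 2) := by
      rw [ht]; field_simp
    have hr : w - (al • u + t • n) = 0 := by
      apply eq_zero_of_orth u e
      · rw [huu]; exact ne_of_gt (by linarith)
      · rw [hee]; exact ne_of_gt (by linarith)
      · exact hue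
      · simp only [inner_sub_left, inner_add_left, real_inner_smul_left]
        rw [iwu, huu, hnu, hal]
        field_simp
        ring
      · simp only [inner_sub_left, inner_add_left, real_inner_smul_left]
        rw [iwe, hue, hne]
        ring
      · rw [← hndef]
        simp only [inner_sub_left, inner_add_left, real_inner_smul_left]
        rw [itn, hun, hnn]
        ring
    have hw' : w = al • u + t • n := by rwa [sub_eq_zero] at hr
    have ht2 : t ^ 2 = ga ^ 2 := by
      have hexp : (inner ℝ w w : ℝ) = al ^ 2 * ((1 + c) / 2) + t ^ 2 * (1 - c ^ 2) := by
        rw [hw']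
        simp only [inner_add_left, inner_add_right, real_inner_smul_left, real_inner_smul_right]
        rw [huu, hun, hnu, hnn]
        ring
      rw [iww] at hexp
      have hrhs : (1 + c) / 2 - al ^ 2 * ((1 + c) / 2) = ga ^ 2 * (1 - c ^ 2) := by
        rw [hal, hga2]; field_simp; ring
      have heq : t ^ 2 * (1 - c ^ 2) = ga ^ 2 * (1 - c ^ 2) := by rw [← hrhs]; linarith
      exact mul_right_cancel₀ (ne_of_gt hnn0) heq
    have hzmw : z = m + w := by rw [hwdef]; abel
    rcases sq_eq_sq_iff_eq_or_eq_neg.mp ht2 with h | h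
    · left; rw [hzmw, hw', h]
    · right; rw [hzmw, hw', h]
  · show (m + (al • u + (-ga) • n)) = (m + (al • u + ga • n)) -
      (2 * (inner ℝ ((m + (al • u + ga • n)) - m) n : ℝ) / (inner ℝ n n : ℝ)) • n
    have hd : (m + (al • u + ga • n)) - m = al • u + ga • n := by abel
    have hin : (inner ℝ ((m + (al • u + ga • n)) - m) n : ℝ) = ga * (1 - c ^ 2) := by
      rw [hd]
      simp only [inner_add_left, real_inner_smul_left]
      rw [hun, hnn]
      ring
    rw [hin, hnn]
    have hco : 2 * (ga * (1 - c ^ 2)) / (1 - c ^ 2) = 2 * ga := by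
      field_simp
    rw [hco]
    module
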